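/- arXiv:1508.04862 — 2 statements merged into one kernel-verified Lean document; each statement's English description precedes it below -/
import Mathlib

section
/- Let 𝔤 be a finite-dimensional real Lie algebra and 𝔥 a subalgebra of codimension N such that the 𝔥-action on 𝔤/𝔥 is trace-free. Fix a nonzero Φ ∈ (Λ^N(𝔤/𝔥)*)^𝔥. Then for Y ∈ 𝔤, the interior product ι(Y)Φ ∈ Λ^{N-1}(𝔤/𝔥)* is 𝔥-invariant if and only if Y lies in the normalizer 𝔫_𝔤(𝔥) of 𝔥 in 𝔤. -/
open Module

lemma key {V : Type} [AddCommGroup V] [Module ℝ V] [FiniteDimensional ℝ V] {n : ℕ}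
    (hN : n + 1 = finrank ℝ V) (Φ : V [⋀^Fin (n+1)]→ₗ[ℝ] ℝ) (hΦ : Φ ≠ 0)
    (z : V) (hz : ∀ w : Fin n → V, Φ (Fin.cons z w) = 0) : z = 0 := by
  by_contra hz0
  let b : Basis (Fin (n+1)) ℝ V := (Module.finBasis ℝ V).reindex (finCongr hN.symm)
  have hcoord : ¬ ∀ j, b.coord j z = 0 := fun h => hz0 (b.forall_coord_eq_zero_iff.mp h)
  push_neg at hcoord
  obtain ⟨j, hj⟩ := hcoord
  set v : Fin (n+1) → V := Fin.cons z (b ∘ j.succAbove) with hv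
  have hli : LinearIndependent ℝ v := by
    rw [Fintype.linearIndependent_iff]
    intro g hg
    have h0 : g 0 = 0 := by
      have h1 : g 0 * b.coord j z = 0 := by
        simpa [hv, Fin.sum_univ_succ, Finsupp.single_apply, Fin.succAbove_ne]
          using congrArg (b.coord j) hg
      exact (mul_eq_zero.mp h1).resolve_right hj
    have hrest : ∀ i : Fin n, g i.succ = 0 := by
      have hli2 : LinearIndependent ℝ (b ∘ j.succAbove) :=
        b.linearIndependent.comp _ (Fin.succAbove_right_injective)
      rw [Fintype.linearIndependent_iff] at hli2
      apply hli2
      have := hg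
      rw [Fin.sum_univ_succ] at this
      simpa [hv, h0] using this
    intro i
    exact Fin.cases h0 hrest i
  have hcard : Fintype.card (Fin (n+1)) = finrank ℝ V := by simpa using hN
  let b' := basisOfLinearIndependentOfCardEqFinrank hli hcard
  have hb' : ⇑b' = v := coe_basisOfLinearIndependentOfCardEqFinrank hli hcard
  have := Φ.eq_smul_basis_det b'
  rw [hb'] at this
  have hΦv : Φ v = 0 := hz _
  rw [hΦv, zero_smul] at this
  exact hΦ this

/-- The endomorphism of `𝔤 ⧸ 𝔥` induced by the adjoint action of an element `X ∈ 𝔥`. -/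
noncomputable def adQH {𝔤 : Type} [LieRing 𝔤] [LieAlgebra ℝ 𝔤] (𝔥 : LieSubalgebra ℝ 𝔤)
    (X : 𝔥) : (𝔤 ⧸ 𝔥.toSubmodule) →ₗ[ℝ] 𝔤 ⧸ 𝔥.toSubmodule :=
  Submodule.mapQ _ _ (LieAlgebra.ad ℝ 𝔤 (X : 𝔤))
    (by intro z hz; simpa using 𝔥.lie_mem X.2 hz)

/-- If the `𝔥`-action on `𝔤/𝔥` is trace-free and `Φ` is a nonzero invariant top form on
`𝔤/𝔥`, then the interior product `ι(Y)Φ` is `𝔥`-invariant iff `Y` lies in the normalizer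
of `𝔥` in `𝔤`. -/
theorem stmt1 (𝔤 : Type) [LieRing 𝔤] [LieAlgebra ℝ 𝔤] [FiniteDimensional ℝ 𝔤]
    (𝔥 : LieSubalgebra ℝ 𝔤) (n : ℕ)
    (hN : n + 1 = Module.finrank ℝ (𝔤 ⧸ 𝔥.toSubmodule))
    (htf : ∀ X : 𝔥, LinearMap.trace ℝ _ (adQH 𝔥 X) = 0)
    (Φ : (𝔤 ⧸ 𝔥.toSubmodule) [⋀^Fin (n + 1)]→ₗ[ℝ] ℝ) (hΦ : Φ ≠ 0)
    (hinv : ∀ (X : 𝔥) (v : Fin (n + 1) → (𝔤 ⧸ 𝔥.toSubmodule)),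
      ∑ i, Φ (Function.update v i (adQH 𝔥 X (v i))) = 0)
    (Y : 𝔤) :
    (∀ (X : 𝔥) (w : Fin n → (𝔤 ⧸ 𝔥.toSubmodule)),
        ∑ i, (Φ.curryLeft (Submodule.Quotient.mk Y))
          (Function.update w i (adQH 𝔥 X (w i))) = 0) ↔
      Y ∈ 𝔥.normalizer := by
  set ybar : 𝔤 ⧸ 𝔥.toSubmodule := Submodule.Quotient.mk Y with hybar
  -- the key expansion identity
  have hexp : ∀ (X : 𝔥) (w : Fin n → (𝔤 ⧸ 𝔥.toSubmodule)),
      Φ (Fin.cons (adQH 𝔥 X ybar) w) +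
        ∑ i, (Φ.curryLeft ybar) (Function.update w i (adQH 𝔥 X (w i))) = 0 := by
    intro X w
    have h := hinv X (Fin.cons ybar w)
    rw [Fin.sum_univ_succ] at h
    simp only [Fin.cons_zero, Fin.cons_succ, Fin.update_cons_zero, ← Fin.cons_update] at h
    exact h
  have hAd : ∀ X : 𝔥, adQH 𝔥 X ybar = Submodule.Quotient.mk ⁅(X : 𝔤), Y⁆ := by
    intro X
    simp [adQH, hybar, Submodule.mapQ_apply, LieAlgebra.ad_apply]
  constructor
  · intro hL
    rw [LieSubalgebra.mem_normalizer_iff']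
    intro X hX
    have hzero : ∀ w : Fin n → (𝔤 ⧸ 𝔥.toSubmodule),
        Φ (Fin.cons (adQH 𝔥 ⟨X, hX⟩ ybar) w) = 0 := by
      intro w
      have := hexp ⟨X, hX⟩ w
      rw [hL ⟨X, hX⟩ w] at this
      linarith
    have := key hN Φ hΦ _ hzero
    rw [hAd ⟨X, hX⟩] at this
    exact (Submodule.Quotient.mk_eq_zero _).mp this
  · intro hY X w
    have hmem : ⁅(X : 𝔤), Y⁆ ∈ 𝔥 := (LieSubalgebra.mem_normalizer_iff' 𝔥 Y).mp hY X X.2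
    have h0 : adQH 𝔥 X ybar = 0 := by
      rw [hAd X]
      exact (Submodule.Quotient.mk_eq_zero _).mpr hmem
    have := hexp X w
    rw [h0] at this
    have hz : Φ (Fin.cons (0 : 𝔤 ⧸ 𝔥.toSubmodule) w) = 0 := by
      have h1 : Φ (Fin.cons (0 : 𝔤 ⧸ 𝔥.toSubmodule) w) = Φ.curryLeft 0 w := rfl
      rw [h1, map_zero]
      rfl
    rw [hz] at this
    linarith
end

section
/- Let 𝔤 be a finite-dimensional real Lie algebra that is not unimodular (i.e. there exists X ∈ 𝔤 with tr(ad_𝔤(X)) ≠ 0), and let 𝔤′ be a subalgebra that is reductive in 𝔤 (meaning 𝔤 is a semisimple 𝔤′-module under the adjoint action) and whose adjoint action on 𝔤 is trace-free. Then the centralizer 𝔷_𝔤(𝔤′) of 𝔤′ in 𝔤 acts on 𝔤 non-trace-freely: there exists Z ∈ 𝔷_𝔤(𝔤′) with tr(ad_𝔤(Z)) ≠ 0. -/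
/-!
The kernel `𝔤₁` of `X ↦ tr(ad X)` contains `[𝔤, 𝔤]`, so it is `𝔤′`-invariant and has a
`𝔤′`-invariant complement `W`, which is nonzero because `𝔤` is not unimodular. For `X ∈ 𝔤′`
and `Z ∈ W` the bracket `⁅X, Z⁆` lies in both `W` and `[𝔤, 𝔤] ⊆ 𝔤₁`, hence vanishes; any
`Z ∈ W \ 𝔤₁` is then the required element.
-/

open Module LieAlgebra

attribute [local instance] LieRing.ofAssociativeRing

namespace LieAlgebra

variable (R L : Type*) [CommRing R] [LieRing L] [LieAlgebra R L]

/-- The ideal `𝔤₁`, as a submodule. -/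
noncomputable def unimodularKernel : Submodule R L :=
  LinearMap.ker ((LinearMap.trace R L).comp (ad R L).toLinearMap)

variable {R L}

lemma mem_unimodularKernel {x : L} :
    x ∈ unimodularKernel R L ↔ LinearMap.trace R L (ad R L x) = 0 :=
  Iff.rfl

lemma lie_mem_unimodularKernel (x y : L) : ⁅x, y⁆ ∈ unimodularKernel R L := by
  rw [mem_unimodularKernel, LieHom.map_lie, LinearMap.trace_lie]

lemma lie_eq_zero_of_mem_of_disjoint {S : Set L} {K W : Submodule R L}
    (hK : ∀ x y : L, ⁅x, y⁆ ∈ K) (hW : ∀ x ∈ S, ∀ w ∈ W, ⁅x, w⁆ ∈ W) (hKW : Disjoint K W)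
    {z : L} (hz : z ∈ W) (x : L) (hx : x ∈ S) : ⁅z, x⁆ = 0 := by
  have hxz : ⁅x, z⁆ = 0 := (Submodule.disjoint_def.mp hKW) _ (hK x z) (hW x hx z hz)
  rw [← lie_skew, hxz, neg_zero]

end LieAlgebra

lemma Submodule.exists_mem_notMem_of_isCompl {R M : Type*} [Ring R] [AddCommGroup M]
    [Module R M] {K W : Submodule R M} (h : IsCompl K W) (hK : K ≠ ⊤) : ∃ z ∈ W, z ∉ K := by
  by_contra! hWK
  exact hK ((sup_eq_left.mpr hWK).symm.trans h.sup_eq_top)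

theorem stmt5_general (𝔤 : Type) [LieRing 𝔤] [LieAlgebra ℝ 𝔤]
    (𝔤' : LieSubalgebra ℝ 𝔤)
    (hnonuni : ∃ X : 𝔤, LinearMap.trace ℝ 𝔤 (LieAlgebra.ad ℝ 𝔤 X) ≠ 0)
    (hred : ∀ W : Submodule ℝ 𝔤, (∀ X ∈ 𝔤', ∀ w ∈ W, ⁅X, w⁆ ∈ W) →
      ∃ W' : Submodule ℝ 𝔤, (∀ X ∈ 𝔤', ∀ w ∈ W', ⁅X, w⁆ ∈ W') ∧ IsCompl W W') :
    ∃ Z : 𝔤, (∀ X ∈ 𝔤', ⁅Z, X⁆ = 0) ∧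
      LinearMap.trace ℝ 𝔤 (LieAlgebra.ad ℝ 𝔤 Z) ≠ 0 := by
  obtain ⟨W, hW, hcompl⟩ :=
    hred (unimodularKernel ℝ 𝔤) fun X _ Y _ ↦ lie_mem_unimodularKernel X Y
  obtain ⟨X₀, hX₀⟩ := hnonuni
  have hproper : unimodularKernel ℝ 𝔤 ≠ ⊤ := fun h ↦
    hX₀ (mem_unimodularKernel.mp (h ▸ Submodule.mem_top))
  obtain ⟨Z, hZW, hZ⟩ := Submodule.exists_mem_notMem_of_isCompl hcompl hproper
  exact ⟨Z, lie_eq_zero_of_mem_of_disjoint lie_mem_unimodularKernel hW hcompl.disjoint hZW,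
    fun h ↦ hZ (mem_unimodularKernel.mpr h)⟩

/-- If `𝔤` is a non-unimodular finite-dimensional real Lie algebra and `𝔤′` is a
subalgebra that is reductive in `𝔤` (every `𝔤′`-invariant subspace of `𝔤` has a
`𝔤′`-invariant complement) whose adjoint action on `𝔤` is trace-free, then the
centralizer `𝔷_𝔤(𝔤′)` acts non-trace-freely on `𝔤`. -/
theorem stmt5 (𝔤 : Type) [LieRing 𝔤] [LieAlgebra ℝ 𝔤] [FiniteDimensional ℝ 𝔤]
    (𝔤' : LieSubalgebra ℝ 𝔤)
    (hnonuni : ∃ X : 𝔤, LinearMap.trace ℝ 𝔤 (LieAlgebra.ad ℝ 𝔤 X) ≠ 0)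
    (hred : ∀ W : Submodule ℝ 𝔤, (∀ X ∈ 𝔤', ∀ w ∈ W, ⁅X, w⁆ ∈ W) →
      ∃ W' : Submodule ℝ 𝔤, (∀ X ∈ 𝔤', ∀ w ∈ W', ⁅X, w⁆ ∈ W') ∧ IsCompl W W')
    (htf : ∀ X ∈ 𝔤', LinearMap.trace ℝ 𝔤 (LieAlgebra.ad ℝ 𝔤 X) = 0) :
    ∃ Z : 𝔤, (∀ X ∈ 𝔤', ⁅Z, X⁆ = 0) ∧
      LinearMap.trace ℝ 𝔤 (LieAlgebra.ad ℝ 𝔤 Z) ≠ 0 :=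
  stmt5_general 𝔤 𝔤' hnonuni hred
end
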